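/- Let p and p' be strictly positive probability vectors on Fin n, let E : Fin n → ℝ be energies, β > 0, and τ the associated Gibbs distribution. Then there exist N ≥ 1, a strictly positive probability vector r on Fin N, and energies ε, ε' : Fin N → ℝ such that, with reservoir state space Fin N ⊕ Fin N, reservoir energies η = Sum.elim ε ε', initial reservoir distribution w = Sum.elim r 0 and final reservoir distribution w' = Sum.elim 0 r, the thermomajorization curves at inverse temperature β of the joint configuration (p ⊗ w) and of (p' ⊗ w') over the joint energies (i, x) ↦ E i + η x coincide; moreover the average extracted work satisfies ∑ x, r x * (ε' x − ε x) = β⁻¹ * (D₁(p‖τ) − D₁(p'‖τ)). -/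

import Mathlib

/-!
The thermomajorization curve of `(a, F)` is determined by the mass `levelMass β F a k` that `a`
puts on each slope `k = a y * exp (β F y)`, and for a product system these masses are the
multiplicative convolution of those of the factors. The reservoir is `p' ⊗ p` on `Fin n × Fin n`,
first with energies `E ⊕ G_p` and then with `G_{p'} ⊕ E`, where `G_q = -β⁻¹ log q` makes `q` a
Gibbs state with partition function `1`, all of whose slopes equal `1`. Tensoring with such a
state does not change a curve, so the reservoir starts with the curve of `p'` and ends with that
of `p`; the joint curves are then those of `p ⊗ p'` and of `p' ⊗ p`, which agree. The average
work is the difference of the free energies `⟨E⟩_q - ⟨G_q⟩_q = ⟨E⟩_q - β⁻¹ H(q)`, which equals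
`β⁻¹ (D₁(q‖τ) - log Z)`.
-/

open Finset

/-- Kullback–Leibler divergence `D₁(p‖q)`. -/
noncomputable def D1 {S : Type*} [Fintype S] (p q : S → ℝ) : ℝ :=
  ∑ x ∈ Finset.univ.filter (fun x => p x ≠ 0), p x * Real.log (p x / q x)

/-- The thermomajorization curves of `(a, F)` and `(b, F)` at inverse temperature `β`
coincide. -/
def CurvesCoincide {Y : Type*} [Fintype Y] (β : ℝ) (F : Y → ℝ) (a b : Y → ℝ) : Prop :=
  ∀ k : ℝ, 0 < k →
    ∑ y ∈ Finset.univ.filter (fun y => a y * Real.exp (β * F y) = k), a y =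
    ∑ y ∈ Finset.univ.filter (fun y => b y * Real.exp (β * F y) = k), b y

section LevelMass

variable {Y Y' I J X X' : Type*} [Fintype Y] [Fintype Y'] [Fintype I] [Fintype J] [Fintype X]
  [Fintype X'] (β : ℝ)

noncomputable def levelMass (F a : Y → ℝ) (k : ℝ) : ℝ :=
  ∑ y ∈ univ.filter (fun y => a y * Real.exp (β * F y) = k), a y

theorem curvesCoincide_iff_levelMass (F a b : Y → ℝ) :
    CurvesCoincide β F a b ↔ ∀ k, 0 < k → levelMass β F a k = levelMass β F b k :=
  Iff.rfl

theorem levelMass_eq_sum_ite (F a : Y → ℝ) (k : ℝ) :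
    levelMass β F a k = ∑ y, if a y * Real.exp (β * F y) = k then a y else 0 :=
  sum_filter _ _

theorem levelMass_comp_equiv (e : Y' ≃ Y) (F a : Y → ℝ) :
    levelMass β (F ∘ e) (a ∘ e) = levelMass β F a := by
  funext k
  simp only [levelMass_eq_sum_ite]
  exact e.sum_comp fun y => if a y * Real.exp (β * F y) = k then a y else 0

theorem levelMass_sum_elim_zero_right (F : X → ℝ) (G : X' → ℝ) (a : X → ℝ) :
    levelMass β (Sum.elim F G) (Sum.elim a 0) = levelMass β F a := by
  funext k
  rw [levelMass_eq_sum_ite, levelMass_eq_sum_ite, Fintype.sum_sum_type]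
  simp only [Sum.elim_inl, Sum.elim_inr, Pi.zero_apply, zero_mul, ite_self, sum_const_zero,
    add_zero]
  -- the two sides differ only in `Decidable` instances that still mention `Sum.elim`
  rfl

theorem levelMass_sum_elim_zero_left (F : X → ℝ) (G : X' → ℝ) (b : X' → ℝ) :
    levelMass β (Sum.elim F G) (Sum.elim 0 b) = levelMass β G b := by
  funext k
  rw [levelMass_eq_sum_ite, levelMass_eq_sum_ite, Fintype.sum_sum_type]
  simp only [Sum.elim_inl, Sum.elim_inr, Pi.zero_apply, zero_mul, ite_self, sum_const_zero,
    zero_add]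
  rfl

theorem levelMass_prod (E : I → ℝ) (ε r : X → ℝ) (p : I → ℝ) (k : ℝ) :
    levelMass β (fun y : I × X => E y.1 + ε y.2) (fun y => p y.1 * r y.2) k =
      ∑ i, p i * levelMass β ε r (k / (p i * Real.exp (β * E i))) := by
  rw [levelMass_eq_sum_ite, Fintype.sum_prod_type]
  refine sum_congr rfl fun i _ => ?_
  rw [levelMass_eq_sum_ite, mul_sum]
  refine sum_congr rfl fun x _ => ?_
  rcases eq_or_ne (p i) 0 with hp | hp
  · simp [hp]
  have hA : p i * Real.exp (β * E i) ≠ 0 := mul_ne_zero hp (Real.exp_pos _).ne'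
  have hlevel : p i * r x * Real.exp (β * (E i + ε x)) =
      p i * Real.exp (β * E i) * (r x * Real.exp (β * ε x)) := by
    rw [mul_add, Real.exp_add]; ring
  simp only [hlevel, eq_div_iff hA, mul_comm (p i * Real.exp (β * E i))]
  split_ifs <;> simp

theorem levelMass_prod_comm (E : I → ℝ) (F : J → ℝ) (p : I → ℝ) (q : J → ℝ) :
    levelMass β (fun y : I × J => E y.1 + F y.2) (fun y => p y.1 * q y.2) =
      levelMass β (fun y : J × I => F y.1 + E y.2) (fun y => q y.1 * p y.2) := by
  rw [← levelMass_comp_equiv β (Equiv.prodComm J I)]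
  congr 1 <;> funext y <;> simp [add_comm, mul_comm]

theorem levelMass_prod_congr_right (E : I → ℝ) (p : I → ℝ) {ε : X → ℝ} {r : X → ℝ}
    {F : J → ℝ} {q : J → ℝ} (h : levelMass β ε r = levelMass β F q) :
    levelMass β (fun y : I × X => E y.1 + ε y.2) (fun y => p y.1 * r y.2) =
      levelMass β (fun y : I × J => E y.1 + F y.2) (fun y => p y.1 * q y.2) := by
  funext k
  simp only [levelMass_prod, h]

theorem levelMass_prod_sum_elim_zero_right (E : I → ℝ) (ε : X → ℝ) (ε' : X' → ℝ)
    (p : I → ℝ) (r : X → ℝ) :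
    levelMass β (fun y : I × (X ⊕ X') => E y.1 + Sum.elim ε ε' y.2)
        (fun y => p y.1 * Sum.elim r (0 : X' → ℝ) y.2) =
      levelMass β (fun y : I × X => E y.1 + ε y.2) (fun y => p y.1 * r y.2) := by
  rw [← levelMass_sum_elim_zero_right β (fun y : I × X => E y.1 + ε y.2)
      (fun y : I × X' => E y.1 + ε' y.2),
    ← levelMass_comp_equiv β (Equiv.prodSumDistrib I X X')]
  congr 1 <;> funext ⟨i, x⟩ <;> cases x <;> simp [Equiv.prodSumDistrib]

theorem levelMass_prod_sum_elim_zero_left (E : I → ℝ) (ε : X → ℝ) (ε' : X' → ℝ)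
    (p : I → ℝ) (r : X' → ℝ) :
    levelMass β (fun y : I × (X ⊕ X') => E y.1 + Sum.elim ε ε' y.2)
        (fun y => p y.1 * Sum.elim (0 : X → ℝ) r y.2) =
      levelMass β (fun y : I × X' => E y.1 + ε' y.2) (fun y => p y.1 * r y.2) := by
  rw [← levelMass_sum_elim_zero_left β (fun y : I × X => E y.1 + ε y.2)
      (fun y : I × X' => E y.1 + ε' y.2),
    ← levelMass_comp_equiv β (Equiv.prodSumDistrib I X X')]
  congr 1 <;> funext ⟨i, x⟩ <;> cases x <;> simp [Equiv.prodSumDistrib]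

theorem curvesCoincide_of_levelMass_eq (E : I → ℝ) (p p' : I → ℝ) {ε ε' r : X → ℝ}
    (hε : levelMass β ε r = levelMass β E p') (hε' : levelMass β ε' r = levelMass β E p) :
    CurvesCoincide β (fun y : I × (X ⊕ X) => E y.1 + Sum.elim ε ε' y.2)
      (fun y => p y.1 * Sum.elim r (0 : X → ℝ) y.2)
      (fun y => p' y.1 * Sum.elim (0 : X → ℝ) r y.2) := by
  rw [curvesCoincide_iff_levelMass, levelMass_prod_sum_elim_zero_right,
    levelMass_prod_sum_elim_zero_left, levelMass_prod_congr_right β E p hε,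
    levelMass_prod_congr_right β E p' hε', levelMass_prod_comm]
  exact fun _ _ => rfl

end LevelMass

section Thermal

variable {S I J : Type*} [Fintype I] [Fintype J] {β : ℝ}

noncomputable def thermalEnergy (β : ℝ) (s : S → ℝ) (x : S) : ℝ :=
  -β⁻¹ * Real.log (s x)

theorem mul_exp_thermalEnergy (hβ : β ≠ 0) {s : S → ℝ} {x : S} (hs : 0 < s x) :
    s x * Real.exp (β * thermalEnergy β s x) = 1 := by
  rw [thermalEnergy, ← mul_assoc, mul_neg, mul_inv_cancel₀ hβ, neg_one_mul, Real.exp_neg,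
    Real.exp_log hs, mul_inv_cancel₀ hs.ne']

theorem levelMass_thermalEnergy [Fintype S] (hβ : β ≠ 0) {s : S → ℝ} (hs : ∀ x, 0 < s x)
    (hs1 : ∑ x, s x = 1) (k : ℝ) :
    levelMass β (thermalEnergy β s) s k = if k = 1 then 1 else 0 := by
  rw [levelMass_eq_sum_ite]
  simp_rw [mul_exp_thermalEnergy hβ (hs _)]
  by_cases hk : k = 1 <;> simp [hk, eq_comm, hs1]

theorem levelMass_prod_thermalEnergy (hβ : β ≠ 0) (E q : I → ℝ) {s : J → ℝ}
    (hs : ∀ j, 0 < s j) (hs1 : ∑ j, s j = 1) :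
    levelMass β (fun y : I × J => E y.1 + thermalEnergy β s y.2) (fun y => q y.1 * s y.2) =
      levelMass β E q := by
  funext k
  rw [levelMass_prod, levelMass_eq_sum_ite]
  refine sum_congr rfl fun i _ => ?_
  rw [levelMass_thermalEnergy hβ hs hs1]
  rcases eq_or_ne (q i) 0 with hq | hq
  · simp [hq]
  simp only [div_eq_one_iff_eq (mul_ne_zero hq (Real.exp_pos _).ne'), eq_comm (a := k)]
  split_ifs <;> simp

theorem D1_eq_of_gibbs [Fintype S] (hβ : β ≠ 0) (E : S → ℝ) {p τ : S → ℝ}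
    (hp : ∑ i, p i = 1)
    (hτ : ∀ i, τ i = Real.exp (-β * E i) / ∑ j, Real.exp (-β * E j)) :
    D1 p τ = β * (∑ i, p i * E i - ∑ i, p i * thermalEnergy β p i) +
      Real.log (∑ j, Real.exp (-β * E j)) := by
  have : Nonempty S := by
    by_contra h
    simp [not_nonempty_iff.mp h] at hp
  have hZ : 0 < ∑ j, Real.exp (-β * E j) := sum_pos (fun _ _ => Real.exp_pos _) univ_nonempty
  have hterm : ∀ i, p i * Real.log (p i / τ i) =
      β * (p i * E i - p i * thermalEnergy β p i) +
        p i * Real.log (∑ j, Real.exp (-β * E j)) := by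
    intro i
    rcases eq_or_ne (p i) 0 with hpi | hpi
    · simp [hpi]
    rw [hτ, Real.log_div hpi (div_pos (Real.exp_pos _) hZ).ne',
      Real.log_div (Real.exp_pos _).ne' hZ.ne', Real.log_exp, thermalEnergy]
    field_simp
    ring
  rw [D1, sum_filter_of_ne fun i _ h => left_ne_zero_of_mul h, sum_congr rfl fun i _ => hterm i,
    sum_add_distrib, ← sum_mul, hp, one_mul, ← mul_sum, ← sum_sub_distrib]

theorem sum_prod_mul_add {q : I → ℝ} {s : J → ℝ} (hq : ∑ i, q i = 1) (hs : ∑ j, s j = 1)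
    (f : I → ℝ) (g : J → ℝ) :
    ∑ y : I × J, q y.1 * s y.2 * (f y.1 + g y.2) = ∑ i, q i * f i + ∑ j, s j * g j := by
  have hf : ∑ y : I × J, q y.1 * s y.2 * f y.1 = ∑ i, q i * f i := by
    rw [Fintype.sum_prod_type]
    refine sum_congr rfl fun i _ => ?_
    simp_rw [mul_right_comm (q i) (s _), ← mul_sum, hs, mul_one]
  have hg : ∑ y : I × J, q y.1 * s y.2 * g y.2 = ∑ j, s j * g j := by
    rw [Fintype.sum_prod_type_right]
    refine sum_congr rfl fun j _ => ?_
    simp_rw [mul_assoc, ← sum_mul, hq, one_mul]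
  simp only [mul_add, sum_add_distrib, hf, hg]

end Thermal

/-- Theorem 2: for any state transition `p → p'` there exists an efficient multi-level
work reservoir achieving zero entropy production, extracting the nonequilibrium free
energy difference `β⁻¹ (D₁(p‖τ) − D₁(p'‖τ))`. -/
theorem efficient_work_reservoir_exists
    {n : ℕ} (p p' : Fin n → ℝ)
    (hp0 : ∀ i, 0 < p i) (hp1 : ∑ i, p i = 1)
    (hp'0 : ∀ i, 0 < p' i) (hp'1 : ∑ i, p' i = 1)
    (E : Fin n → ℝ) (β : ℝ) (hβ : 0 < β)
    (τ : Fin n → ℝ)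
    (hτ : ∀ i, τ i = Real.exp (-β * E i) / ∑ j, Real.exp (-β * E j)) :
    ∃ (N : ℕ) (_ : 1 ≤ N) (r : Fin N → ℝ) (ε ε' : Fin N → ℝ),
      (∀ j, 0 < r j) ∧ (∑ j, r j = 1) ∧
      CurvesCoincide β
        (fun y : Fin n × (Fin N ⊕ Fin N) => E y.1 + Sum.elim ε ε' y.2)
        (fun y : Fin n × (Fin N ⊕ Fin N) => p y.1 * Sum.elim r (0 : Fin N → ℝ) y.2)
        (fun y : Fin n × (Fin N ⊕ Fin N) => p' y.1 * Sum.elim (0 : Fin N → ℝ) r y.2) ∧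
      ∑ x, r x * (ε' x - ε x) = β⁻¹ * (D1 p τ - D1 p' τ) := by
  have hn : n ≠ 0 := by
    rintro rfl
    simp at hp1
  let d : Fin (n * n) ≃ Fin n × Fin n := finProdFinEquiv.symm
  let r : Fin n × Fin n → ℝ := fun y => p' y.1 * p y.2
  let ε : Fin n × Fin n → ℝ := fun y => E y.1 + thermalEnergy β p y.2
  let ε' : Fin n × Fin n → ℝ := fun y => thermalEnergy β p' y.1 + E y.2
  refine ⟨n * n, Nat.one_le_iff_ne_zero.mpr (mul_ne_zero hn hn), r ∘ d, ε ∘ d, ε' ∘ d,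
    fun x => mul_pos (hp'0 _) (hp0 _), ?_, ?_, ?_⟩
  · refine (d.sum_comp r).trans ?_
    rw [Fintype.sum_prod_type, ← Fintype.sum_mul_sum, hp1, hp'1, one_mul]
  · apply curvesCoincide_of_levelMass_eq <;> rw [levelMass_comp_equiv]
    · exact levelMass_prod_thermalEnergy hβ.ne' E p' hp0 hp1
    · rw [levelMass_prod_comm]
      exact levelMass_prod_thermalEnergy hβ.ne' E p hp'0 hp'1
  · refine (d.sum_comp fun y => r y * (ε' y - ε y)).trans ?_
    simp only [mul_sub, sum_sub_distrib, r, ε, ε', sum_prod_mul_add hp'1 hp1,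
      D1_eq_of_gibbs hβ.ne' E hp1 hτ, D1_eq_of_gibbs hβ.ne' E hp'1 hτ]
    field_simp
    ring
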